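/- arXiv:2404.01354 — 4 statements merged into one kernel-verified Lean document; each statement's English description precedes it below -/
import Mathlib

section
/- The map h*: Tab(G) → P(NTup(G)), sending a table T to the set of all named tuples extending some row of T, is an order embedding of (Tab(G), ≤) into (P(NTup(G)), ⊆): T1 ≤ T2 if and only if h*(T1) ⊆ h*(T2). -/
open Classical
noncomputable section

/-- The domain (set of defined columns) of a named tuple, modeled as `ℕ → Option G`. -/
def tdom {G : Type*} (t : ℕ → Option G) : Set ℕ := {x | (t x).isSome}

/-- Restriction of a named tuple to a set of columns. -/
def restr {G : Type*} (t : ℕ → Option G) (X : Set ℕ) : ℕ → Option G :=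
  fun x => if x ∈ X then t x else none

/-- `T` is a table with schema `X`: either `T` is empty with schema `var` (= `Set.univ`),
or `T` is nonempty, `X` is finite, and every row of `T` has domain `X`. -/
def HasSchema {G : Type*} (T : Set (ℕ → Option G)) (X : Set ℕ) : Prop :=
  (T = ∅ ∧ X = Set.univ) ∨ (T ≠ ∅ ∧ X.Finite ∧ ∀ t ∈ T, tdom t = X)

/-- Natural join of tables `T1 ⊆ G^{X1}` and `T2 ⊆ G^{X2}`. -/
def join {G : Type*} (T1 T2 : Set (ℕ → Option G)) (X1 X2 : Set ℕ) :
    Set (ℕ → Option G) :=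
  {t | tdom t = X1 ∪ X2 ∧ restr t X1 ∈ T1 ∧ restr t X2 ∈ T2}

/-- `h*(T)`: all named tuples (finite-domain tuples) extending some row of `T`. -/
def hstar {G : Type*} (T : Set (ℕ → Option G)) : Set (ℕ → Option G) :=
  {t | (tdom t).Finite ∧ ∃ s ∈ T, tdom s ⊆ tdom t ∧ restr t (tdom s) = s}

lemma restr_tdom_self {G : Type*} (t : ℕ → Option G) : restr t (tdom t) = t := by
  funext x
  simp only [restr, tdom, Set.mem_setOf_eq]
  split
  · rfl
  · next h => exact (Option.not_isSome_iff_eq_none.mp h).symm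

lemma tdom_restr {G : Type*} (t : ℕ → Option G) (X : Set ℕ) :
    tdom (restr t X) = X ∩ tdom t := by
  ext x
  simp only [tdom, restr, Set.mem_setOf_eq, Set.mem_inter_iff]
  split
  · next h => simp [h]
  · next h => simp [h]

lemma mem_hstar_self {G : Type*} {T : Set (ℕ → Option G)} {s : ℕ → Option G}
    (hs : s ∈ T) (hfin : (tdom s).Finite) : s ∈ hstar T :=
  ⟨hfin, s, hs, subset_rfl, restr_tdom_self s⟩

/-- Prop. 2: `h*` is an order embedding: `T1 ≤ T2 ↔ h*(T1) ⊆ h*(T2)`. -/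
theorem stmt2 {G : Type*} (T1 T2 : Set (ℕ → Option G)) (X1 X2 : Set ℕ)
    (h1 : HasSchema T1 X1) (h2 : HasSchema T2 X2) :
    T1 = join T1 T2 X1 X2 ↔ hstar T1 ⊆ hstar T2 := by
  rcases h1 with ⟨he1, _⟩ | ⟨hne1, hfin1, hdom1⟩
  · -- T1 empty
    subst he1
    constructor
    · intro _ t ht
      exact absurd ht.2 (by simp [hstar])
    · intro _
      ext t
      simp [join]
  · rcases h2 with ⟨he2, _⟩ | ⟨hne2, hfin2, hdom2⟩
    · -- T2 empty, T1 nonempty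
      subst he2
      constructor
      · intro hT
        obtain ⟨s, hs⟩ := Set.nonempty_iff_ne_empty.mpr hne1
        rw [hT] at hs
        exact absurd hs.2.2 (Set.notMem_empty _)
      · intro hsub
        obtain ⟨s, hs⟩ := Set.nonempty_iff_ne_empty.mpr hne1
        have := hsub (mem_hstar_self hs ((hdom1 s hs) ▸ hfin1))
        obtain ⟨_, u, hu, _⟩ := this
        exact absurd hu (Set.notMem_empty _)
    · -- both nonempty
      constructor
      · intro hT t ht
        obtain ⟨htfin, s, hs, hsub, hres⟩ := ht
        have hsj : s ∈ join T1 T2 X1 X2 := hT ▸ hs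
        refine ⟨htfin, restr s X2, hsj.2.2, ?_, ?_⟩
        · rw [tdom_restr]
          exact (Set.inter_subset_right).trans hsub
        · funext x
          rw [tdom_restr]
          simp only [restr, Set.mem_inter_iff]
          by_cases hx2 : x ∈ X2 <;> by_cases hxs : x ∈ tdom s <;>
            simp only [hx2, hxs, true_and, false_and, and_true, and_false, if_true, if_false]
          · have := congrFun hres x
            simp only [restr, hxs, if_true] at this
            exact this
          · exact (Option.not_isSome_iff_eq_none.mp hxs).symm
      · intro hsub
        -- first: X2 ⊆ X1
        obtain ⟨s0, hs0⟩ := Set.nonempty_iff_ne_empty.mpr hne1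
        have hX21 : X2 ⊆ X1 := by
          obtain ⟨_, u, hu, husub, _⟩ := hsub (mem_hstar_self hs0 ((hdom1 s0 hs0) ▸ hfin1))
          rw [hdom2 u hu, hdom1 s0 hs0] at husub
          exact husub
        have hunion : X1 ∪ X2 = X1 := Set.union_eq_self_of_subset_right hX21
        ext t
        constructor
        · intro ht
          have hdt : tdom t = X1 := hdom1 t ht
          obtain ⟨_, u, hu, _, hres⟩ := hsub (mem_hstar_self ht (hdt ▸ hfin1))
          refine ⟨by rw [hdt, hunion], by rw [← hdt, restr_tdom_self]; exact ht, ?_⟩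
          rw [← hdom2 u hu, hres]
          exact hu
        · intro ⟨hdt, ht1, _⟩
          rw [hunion] at hdt
          have : restr t X1 = t := by rw [← hdt]; exact restr_tdom_self t
          rwa [this] at ht1
end
end

section
/- In a projectional semilattice, if x ∉ dom(v), then c_x(u ∧ v) = c_x(u) ∧ v for all u. -/
/-- A projectional semilattice: a bounded semilattice `(V, ⊓, ⊥, ⊤)` with
cylindrifications `c x`, diagonals `d x y` and a domain function `dm`,
satisfying axioms (PS0)–(PS12). Variables are modeled by `ℕ`. -/
class ProjSemilattice (V : Type*) extends SemilatticeInf V, BoundedOrder V where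
  c : ℕ → V → V
  d : ℕ → ℕ → V
  dm : V → Set ℕ
  /-- (PS1) -/
  c_bot : ∀ x, c x (⊥ : V) = ⊥
  /-- (PS2) -/
  le_c : ∀ x (u : V), u ≤ c x u
  /-- (PS3) -/
  c_inf : ∀ x (u v : V), c x (u ⊓ c x v) = c x u ⊓ c x v
  /-- (PS4) -/
  c_comm : ∀ x y (u : V), c x (c y u) = c y (c x u)
  /-- (PS5) -/
  dim_ax : ∀ x (u : V), u ≠ ⊥ → (u ≠ c x u ↔ u ≤ d x x)
  /-- (PS6) -/
  d_comp : ∀ x y z, x ≠ y → x ≠ z → (d y z : V) = c x (d y x ⊓ d x z)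
  /-- (PS7) -/
  d_inj : ∀ x y (u : V), x ≠ y → d x y ⊓ c x (d x y ⊓ u) ≤ u
  /-- (PS8) -/
  dm_finite : ∀ (u : V), u ≠ ⊥ → (dm u).Finite
  /-- (PS9) -/
  dm_def : ∀ (u : V), dm u = {x | u ≤ d x x}
  /-- (PS10) -/
  dm_empty : ∀ (u : V), dm u = ∅ → u = ⊤
  /-- (PS11) -/
  d_ne_bot : ∀ x, (d x x : V) ≠ ⊥
  /-- (PS12) -/
  d_symm : ∀ x y, (d x y : V) = d y x

open ProjSemilattice

theorem stmt8 {V : Type*} [ProjSemilattice V] (x : ℕ) (u v : V) (h : x ∉ dm v) :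
    c x (u ⊓ v) = c x u ⊓ v := by
  by_cases hv : v = ⊥
  · simp [hv, c_bot]
  · have hcv : v = c x v := by
      by_contra hne
      have : v ≤ d x x := (dim_ax x v hv).mp hne
      exact h (by rw [dm_def]; exact this)
    calc c x (u ⊓ v) = c x (u ⊓ c x v) := by rw [← hcv]
      _ = c x u ⊓ c x v := c_inf x u v
      _ = c x u ⊓ v := by rw [← hcv]
end

section
/- In a projectional semilattice, each diagonal d_{xy} is nonzero and has domain exactly {x, y}: dom(d_{xy}) = {x, y}. -/
open ProjSemilattice

lemma my_c_idem {V : Type*} [ProjSemilattice V] (x : ℕ) (u : V) :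
    c x (c x u) = c x u := by
  have h := c_inf x (c x u) u
  rw [inf_idem] at h
  exact le_antisymm (by rw [h]; exact inf_le_right) (le_c x (c x u))

lemma my_dxy_ne_bot {V : Type*} [ProjSemilattice V] (x y : ℕ) :
    (d x y : V) ≠ ⊥ := by
  by_cases hxy : x = y
  · subst hxy; exact d_ne_bot x
  · intro h
    have h6 := d_comp y x x (V := V) (Ne.symm hxy) (Ne.symm hxy)
    rw [d_symm y x, inf_idem, h, c_bot] at h6
    exact d_ne_bot x h6

lemma my_dxy_le_dxx {V : Type*} [ProjSemilattice V] {x y : ℕ} (h : x ≠ y) :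
    (d x y : V) ≤ d x x := by
  have h6 := d_comp y x x (V := V) (Ne.symm h) (Ne.symm h)
  rw [d_symm y x, inf_idem] at h6
  rw [h6]
  exact le_c y (d x y)

/-- Each diagonal is nonzero and has domain exactly `{x, y}`,
i.e. `d_{xy} ∈ V*[{x,y}]`. -/
theorem stmt12 {V : Type*} [ProjSemilattice V] (x y : ℕ) :
    (d x y : V) ≠ ⊥ ∧ dm (d x y : V) = {x, y} := by
  refine ⟨my_dxy_ne_bot x y, ?_⟩
  rw [dm_def]
  ext z
  simp only [Set.mem_setOf_eq, Set.mem_insert_iff, Set.mem_singleton_iff]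
  constructor
  · intro hle
    by_contra hc
    push_neg at hc
    obtain ⟨hzx, hzy⟩ := hc
    have h6 := d_comp z x y (V := V) hzx hzy
    have heq : c z (d x y : V) = d x y := by rw [h6, my_c_idem]
    exact ((dim_ax z (d x y) (my_dxy_ne_bot x y)).mpr hle) heq.symm
  · rintro (rfl | rfl)
    · by_cases hxy : z = y
      · subst hxy; exact le_refl _
      · exact my_dxy_le_dxx hxy
    · by_cases hxy : x = z
      · subst hxy; exact le_refl _
      · rw [d_symm]; exact my_dxy_le_dxx (Ne.symm hxy)
end

section
/- In a projectional semilattice, for every finite relation ρ ⊆ var × var, the generalized diagonal e_ρ := ⋀_{(x,y)∈ρ} d_{xy} is nonzero and has domain field(ρ) = ⋃{{x,y} | (x,y) ∈ ρ}. -/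
open ProjSemilattice

/-- Generalized diagonal `e_ρ := ⋀_{(x,y) ∈ ρ} d_{xy}` for a finite relation `ρ`. -/
def eD (V : Type*) [ProjSemilattice V] (ρ : Finset (ℕ × ℕ)) : V :=
  ρ.inf (fun p => d p.1 p.2)

section Lemmas
variable {V : Type*} [ProjSemilattice V]

lemma PS.eD_le {ρ : Finset (ℕ × ℕ)} {p : ℕ × ℕ} (hp : p ∈ ρ) :
    eD V ρ ≤ d p.1 p.2 := by
  unfold eD
  exact Finset.inf_le hp

lemma PS.c_top (x : ℕ) : c x (⊤ : V) = ⊤ :=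
  top_le_iff.mp (le_c x ⊤)

lemma PS.c_idem (x : ℕ) (u : V) : c x (c x u) = c x u := by
  have h := c_inf x (⊤ : V) u
  simpa [PS.c_top] using h

lemma PS.c_d_eq (x y : ℕ) (h : x ≠ y) : c x (d x y : V) = d y y := by
  have h6 := d_comp (V := V) x y y h h
  rw [d_symm y x, inf_idem] at h6
  exact h6.symm

lemma PS.c_fix_d (z x y : ℕ) (hx : z ≠ x) (hy : z ≠ y) :
    c z (d x y : V) = d x y := by
  have h6 := d_comp (V := V) z x y hx hy
  rw [h6, PS.c_idem]

lemma PS.d_ne_bot' (x y : ℕ) : (d x y : V) ≠ ⊥ := by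
  rcases eq_or_ne x y with rfl | h
  · exact d_ne_bot x
  · intro hb
    have := PS.c_d_eq (V := V) x y h
    rw [hb, c_bot] at this
    exact d_ne_bot y this.symm

lemma PS.dxx_ne_c (x : ℕ) : (d x x : V) ≠ c x (d x x) :=
  (dim_ax x (d x x) (d_ne_bot x)).mpr le_rfl

lemma PS.d_le_dxx_left (x y : ℕ) : (d x y : V) ≤ d x x := by
  rcases eq_or_ne x y with rfl | h
  · exact le_rfl
  · have hc : c x (d x y : V) = d y y := PS.c_d_eq x y h
    have hc' : c y (d x y : V) = d x x := by
      rw [d_symm]; exact PS.c_d_eq y x h.symm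
    refine (dim_ax x (d x y) (PS.d_ne_bot' x y)).mp ?_
    intro heq
    rw [hc] at heq
    apply PS.dxx_ne_c (V := V) x
    calc (d x x : V) = c y (d x y) := hc'.symm
      _ = c y (d y y) := by rw [← heq]
      _ = c y (c x (d x y)) := by rw [hc]
      _ = c x (c y (d x y)) := c_comm y x _
      _ = c x (d x x) := by rw [hc']

lemma PS.d_le_dxx_right (x y : ℕ) : (d x y : V) ≤ d y y := by
  rw [d_symm]; exact PS.d_le_dxx_left y x

/-- transitivity of diagonals -/
lemma PS.d_trans (x y z : ℕ) : (d x y : V) ⊓ d y z ≤ d x z := by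
  rcases eq_or_ne y x with rfl | hyx
  · exact inf_le_right
  rcases eq_or_ne y z with rfl | hyz
  · exact inf_le_left
  · rw [d_comp y x z hyx hyz]
    exact le_c y _

def fld (ρ : Finset (ℕ × ℕ)) : Finset ℕ :=
  ρ.image Prod.fst ∪ ρ.image Prod.snd

lemma fld_mem {ρ : Finset (ℕ × ℕ)} {z : ℕ} :
    z ∈ fld ρ ↔ ∃ p ∈ ρ, p.1 = z ∨ p.2 = z := by
  simp only [fld, Finset.mem_union, Finset.mem_image]
  constructor
  · rintro (⟨p, hp, h⟩ | ⟨p, hp, h⟩)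
    · exact ⟨p, hp, Or.inl h⟩
    · exact ⟨p, hp, Or.inr h⟩
  · rintro ⟨p, hp, h | h⟩
    · exact Or.inl ⟨p, hp, h⟩
    · exact Or.inr ⟨p, hp, h⟩

lemma PS.c_fix_eD {z : ℕ} : ∀ {ρ : Finset (ℕ × ℕ)}, z ∉ fld ρ →
    c z (eD V ρ) = eD V ρ := by
  intro ρ
  induction ρ using Finset.induction_on with
  | empty => intro _; simp [eD, PS.c_top]
  | @insert p s hps ih =>
    intro hz
    have h1 : z ∉ fld s := by
      intro hin; apply hz
      rw [fld_mem] at hin ⊢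
      obtain ⟨q, hq, h⟩ := hin
      exact ⟨q, Finset.mem_insert_of_mem hq, h⟩
    have h2 : z ≠ p.1 ∧ z ≠ p.2 := by
      constructor <;> (intro h; apply hz; rw [fld_mem])
      · exact ⟨p, Finset.mem_insert_self _ _, Or.inl h.symm⟩
      · exact ⟨p, Finset.mem_insert_self _ _, Or.inr h.symm⟩
    have hfd : c z (d p.1 p.2 : V) = d p.1 p.2 := PS.c_fix_d z p.1 p.2 h2.1 h2.2
    have he := ih h1
    rw [eD, Finset.inf_insert, ← eD]
    calc c z ((d p.1 p.2 : V) ⊓ eD V s)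
        = c z ((d p.1 p.2 : V) ⊓ c z (eD V s)) := by rw [he]
      _ = c z (d p.1 p.2 : V) ⊓ c z (eD V s) := c_inf z _ _
      _ = (d p.1 p.2 : V) ⊓ eD V s := by rw [hfd, he]

lemma PS.c_dxx_top (x : ℕ) : c x (d x x : V) = ⊤ := by
  set u : V := c x (d x x) with hu
  have hub : u ≠ ⊥ := by
    intro hb
    apply d_ne_bot (V := V) x
    have h1 : (d x x : V) ≤ u := le_c x (d x x)
    rw [hb] at h1
    exact le_bot_iff.mp h1
  have hfix : ∀ z, c z u = u := by
    intro z
    rcases eq_or_ne z x with rfl | hz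
    · exact PS.c_idem z _
    · rw [hu, ← c_comm, PS.c_fix_d z x x hz hz]
  apply dm_empty
  rw [dm_def]
  ext z
  simp only [Set.mem_setOf_eq, Set.mem_empty_iff_false, iff_false]
  intro hle
  exact ((dim_ax z u hub).mpr hle) (hfix z).symm

lemma PS.subst_le (x y u v : ℕ) :
    (d x y : V) ⊓ d (if u = x then y else u) (if v = x then y else v) ≤ d u v := by
  by_cases hu : u = x <;> by_cases hv : v = x
  · subst hu; subst hv
    simp only [if_pos rfl]
    exact inf_le_left.trans (PS.d_le_dxx_left _ y)
  · subst hu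
    simp only [if_pos rfl, if_neg hv]
    exact PS.d_trans u y v
  · subst hv
    simp only [if_neg hu, if_pos rfl]
    have h1 : (d u y : V) ⊓ d y v = d v y ⊓ d u y := by
      rw [inf_comm, d_symm y v]
    have := PS.d_trans (V := V) u y v
    rw [h1] at this
    exact this
  · simp only [if_neg hu, if_neg hv]
    exact inf_le_right

lemma PS.eD_ne_bot : ∀ (n : ℕ) (ρ : Finset (ℕ × ℕ)), (fld ρ).card ≤ n →
    eD V ρ ≠ ⊥ := by
  have htop : (⊤ : V) ≠ ⊥ := by
    intro h
    apply PS.d_ne_bot' (V := V) 0 0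
    exact le_bot_iff.mp (h ▸ (le_top : (d 0 0 : V) ≤ ⊤))
  intro n
  induction n with
  | zero =>
    intro ρ hc
    have hρ : ρ = ∅ := by
      by_contra hne
      obtain ⟨p, hp⟩ := Finset.nonempty_iff_ne_empty.mpr hne
      have : p.1 ∈ fld ρ := fld_mem.mpr ⟨p, hp, Or.inl rfl⟩
      simp [Finset.card_eq_zero.mp (Nat.le_zero.mp hc)] at this
    rw [hρ]
    simpa only [eD, Finset.inf_empty] using htop
  | succ n ih =>
    intro ρ hc
    rcases Finset.eq_empty_or_nonempty ρ with rfl | ⟨p, hp⟩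
    · simpa only [eD, Finset.inf_empty] using htop
    · set x := p.1 with hx
      have hxf : x ∈ fld ρ := fld_mem.mpr ⟨p, hp, Or.inl rfl⟩
      by_cases hsing : ∀ q ∈ ρ, q.1 = x ∧ q.2 = x
      · have heq : eD V ρ = d x x := by
          rw [eD]
          rw [Finset.inf_congr rfl (fun q hq => by rw [(hsing q hq).1, (hsing q hq).2])]
          exact Finset.inf_const ⟨p, hp⟩ _
        rw [heq]; exact d_ne_bot x
      · push_neg at hsing
        obtain ⟨q, hq, hq2⟩ := hsing
        obtain ⟨y, hyf, hyx⟩ : ∃ y, y ∈ fld ρ ∧ y ≠ x := by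
          by_cases h1 : q.1 = x
          · exact ⟨q.2, fld_mem.mpr ⟨q, hq, Or.inr rfl⟩, fun h => hq2 h1 (h1 ▸ h)⟩
          · exact ⟨q.1, fld_mem.mpr ⟨q, hq, Or.inl rfl⟩, h1⟩
        set σ : ℕ → ℕ := fun v => if v = x then y else v with hσ
        set ρ' : Finset (ℕ × ℕ) :=
          insert (y, y) (ρ.image (fun q => (σ q.1, σ q.2))) with hρ'
        have hσmem : ∀ v, v ∈ fld ρ → σ v ∈ (fld ρ).erase x := by
          intro v hv
          rw [Finset.mem_erase]
          by_cases hvx : v = x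
          · simp [hσ, hvx, hyx, hyf]
          · simp [hσ, hvx, hv]
        have hfld' : fld ρ' ⊆ (fld ρ).erase x := by
          intro z hz
          rw [fld_mem] at hz
          obtain ⟨r, hr, hzr⟩ := hz
          rw [hρ', Finset.mem_insert] at hr
          rcases hr with rfl | hr
          · have hzy : z = y := by rcases hzr with h | h <;> exact h.symm
            subst hzy
            exact Finset.mem_erase.mpr ⟨hyx, hyf⟩
          · rw [Finset.mem_image] at hr
            obtain ⟨s, hs, hsr⟩ := hr
            rcases hzr with h | h
            · subst h; rw [← hsr]
              exact hσmem s.1 (fld_mem.mpr ⟨s, hs, Or.inl rfl⟩)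
            · subst h; rw [← hsr]
              exact hσmem s.2 (fld_mem.mpr ⟨s, hs, Or.inr rfl⟩)
        have hcard : (fld ρ').card ≤ n := by
          have h1 : ((fld ρ).erase x).card < (fld ρ).card :=
            Finset.card_erase_lt_of_mem hxf
          have := Finset.card_le_card hfld'
          omega
        have hIH : eD V ρ' ≠ ⊥ := ih ρ' hcard
        have hxnot : x ∉ fld ρ' := fun h => (Finset.mem_erase.mp (hfld' h)).1 rfl
        have hfix : c x (eD V ρ') = eD V ρ' := PS.c_fix_eD hxnot
        have hyy : eD V ρ' ≤ d y y :=
          PS.eD_le (p := (y, y)) (by rw [hρ']; exact Finset.mem_insert_self _ _)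
        have hkey : c x ((d x y : V) ⊓ eD V ρ') = eD V ρ' := by
          calc c x ((d x y : V) ⊓ eD V ρ')
              = c x ((d x y : V) ⊓ c x (eD V ρ')) := by rw [hfix]
            _ = c x (d x y : V) ⊓ c x (eD V ρ') := c_inf x _ _
            _ = (d y y : V) ⊓ eD V ρ' := by rw [PS.c_d_eq x y (Ne.symm hyx), hfix]
            _ = eD V ρ' := inf_eq_right.mpr hyy
        have hne : (d x y : V) ⊓ eD V ρ' ≠ ⊥ := by
          intro hb
          rw [hb, c_bot] at hkey
          exact hIH hkey.symm
        have hle : (d x y : V) ⊓ eD V ρ' ≤ eD V ρ := by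
          rw [eD]
          apply Finset.le_inf
          intro r hr
          have hmem : (σ r.1, σ r.2) ∈ ρ' := by
            rw [hρ']
            exact Finset.mem_insert_of_mem (Finset.mem_image_of_mem _ hr)
          have h1 : eD V ρ' ≤ d (σ r.1) (σ r.2) := PS.eD_le hmem
          calc (d x y : V) ⊓ eD V ρ' ≤ d x y ⊓ d (σ r.1) (σ r.2) :=
                inf_le_inf_left _ h1
            _ ≤ d r.1 r.2 := PS.subst_le x y r.1 r.2
        intro hb
        rw [hb] at hle
        exact hne (le_bot_iff.mp hle)

end Lemmas

/-- For every finite relation `ρ ⊆ var × var`, the generalized diagonal `e_ρ` is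
nonzero with domain `field(ρ)`. -/
theorem stmt15 {V : Type*} [ProjSemilattice V] (ρ : Finset (ℕ × ℕ)) :
    eD V ρ ≠ ⊥ ∧ dm (eD V ρ) = {z | ∃ p ∈ ρ, p.1 = z ∨ p.2 = z} := by
  have hne : eD V ρ ≠ ⊥ := PS.eD_ne_bot (fld ρ).card ρ le_rfl
  refine ⟨hne, ?_⟩
  rw [dm_def]
  ext z
  simp only [Set.mem_setOf_eq]
  constructor
  · intro hle
    by_contra hz
    have hznot : z ∉ fld ρ := fun h => hz (fld_mem.mp h)
    have hfix := PS.c_fix_eD (V := V) hznot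
    exact (dim_ax z (eD V ρ) hne).mpr hle hfix.symm
  · rintro ⟨p, hp, h | h⟩
    · subst h
      exact (PS.eD_le hp).trans (PS.d_le_dxx_left p.1 p.2)
    · subst h
      exact (PS.eD_le hp).trans (PS.d_le_dxx_right p.1 p.2)
end
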